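/- For every natural number r ≥ 1, the kernel of the endomorphism of F_r = ℂ[α,β,γ]/J_r given by multiplication by (the class of) γ equals the image of the ideal J_{r−1} under the quotient map ℂ[α,β,γ] → F_r (this image makes sense since J_r ⊆ J_{r−1}). -/

import Mathlib

/-!
Multiplication by γ maps J_{r-1} into J_r: on generators this is read off the recurrence, since
the coefficients s² and 2s/(s+1) are invertible whenever R²_s, R³_s are nonzero.

Conversely, let γp = a R¹_r + b R²_r + c γR¹_{r-1}. Modulo γ the ring becomes ℂ[α][β], where
R²_r = (β ± 8) R¹_{r-1}, and R¹_r, R²_r are coprime: consecutive R¹'s are coprime by the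
recurrence, and no β + e divides R¹_r because setting β = -e leaves a monic polynomial of degree r
in α. Since the pair is coprime, a ≡ t R²_r and b ≡ -t R¹_r modulo γ; after cancelling γ this
puts p in (R¹_r, R²_r, R¹_{r-1}) ⊆ J_{r-1}.
-/

open MvPolynomial

/-- The triple (R¹_r, R²_r, R³_r) of polynomials in ℂ[α,β,γ] (α = X 0, β = X 1, γ = X 2). -/
noncomputable def Rr : ℕ → MvPolynomial (Fin 3) ℂ × MvPolynomial (Fin 3) ℂ × MvPolynomial (Fin 3) ℂ
  | 0 => (1, 0, 0)
  | (r + 1) =>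
      (X 0 * (Rr r).1 + C ((r : ℂ) ^ 2) * (Rr r).2.1,
       (X 1 + C ((-1 : ℂ) ^ (r + 1) * 8)) * (Rr r).1 + C ((2 * r : ℂ) / (r + 1)) * (Rr r).2.2,
       X 2 * (Rr r).1)

/-- The ideal J_r = (R¹_r, R²_r, R³_r) ⊆ ℂ[α,β,γ]. -/
noncomputable def Jr (r : ℕ) : Ideal (MvPolynomial (Fin 3) ℂ) :=
  Ideal.span {(Rr r).1, (Rr r).2.1, (Rr r).2.2}

namespace Polynomial

theorem monic_and_natDegree_eq_of_three_term_recurrence {R : Type*} [Semiring R] [Nontrivial R]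
    {p : ℕ → R[X]} (k : ℕ → R) (h0 : p 0 = 1) (h1 : p 1 = X)
    (hrec : ∀ n, p (n + 2) = X * p (n + 1) + C (k n) * p n) (n : ℕ) :
    (p n).Monic ∧ (p n).natDegree = n := by
  induction n using Nat.twoStepInduction with
  | zero => simp [h0]
  | one => simp [h1]
  | more n _ ih =>
    have hlead : (X * p (n + 1)).Monic := monic_X.mul ih.1
    have hdeg : (X * p (n + 1)).natDegree = n + 2 := by
      rw [monic_X.natDegree_mul ih.1, natDegree_X, ih.2]; ring
    have hlow : (C (k n) * p n).degree < (X * p (n + 1)).degree :=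
      degree_lt_degree ((natDegree_C_mul_le _ _).trans_lt (by omega))
    rw [hrec]
    exact ⟨hlead.add_of_left hlow, by rw [natDegree_add_eq_left_of_degree_lt hlow, hdeg]⟩

end Polynomial

theorem IsRelPrime.exists_of_mul_add_mul_eq_zero {B : Type*} [CommRing B] [IsDomain B]
    [DecompositionMonoid B] {f g a b : B} (hfg : IsRelPrime f g) (hg : g ≠ 0)
    (h : a * f + b * g = 0) : ∃ t, a = t * g ∧ b = -(t * f) := by
  obtain ⟨t, ht⟩ : g ∣ a := hfg.symm.dvd_of_dvd_mul_right ⟨-b, by linear_combination h⟩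
  refine ⟨t, by rw [ht, mul_comm], mul_right_cancel₀ hg ?_⟩
  linear_combination h - f * ht

namespace Ideal

theorem mem_span_triple_of_mul_mem_span_triple {A B : Type*} [CommRing A] [CommRing B]
    [IsDomain B] [DecompositionMonoid B] (π : A →+* B) (hπ : Function.Surjective π) {γ : A}
    (hγ : IsLeftRegular γ) (hker : RingHom.ker π = span {γ}) {f g h p : A}
    (hfg : IsRelPrime (π f) (π g)) (hg : π g ≠ 0) (hp : γ * p ∈ span {f, g, γ * h}) :
    p ∈ span {f, g, h} := by
  have dvd_of_mem_ker {x : A} (hx : π x = 0) : γ ∣ x :=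
    mem_span_singleton.mp (hker ▸ RingHom.mem_ker.mpr hx)
  have hπγ : π γ = 0 := RingHom.mem_ker.mp (hker ▸ mem_span_singleton_self γ)
  obtain ⟨a, b, c, habc⟩ := Submodule.mem_span_triple.mp hp
  simp only [smul_eq_mul] at habc
  have hred : π a * π f + π b * π g = 0 := by simpa [hπγ] using congrArg π habc
  obtain ⟨t, hta, htb⟩ := hfg.exists_of_mul_add_mul_eq_zero hg hred
  obtain ⟨t, rfl⟩ := hπ t
  obtain ⟨u, hu⟩ := dvd_of_mem_ker (x := a - t * g) (by simp [hta])
  obtain ⟨v, hv⟩ := dvd_of_mem_ker (x := b + t * f) (by simp [htb])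
  refine Submodule.mem_span_triple.mpr ⟨u, v, c, hγ ?_⟩
  simp only [smul_eq_mul]
  linear_combination habc - f * hu - g * hv

end Ideal

/-- Reduction modulo γ, with ℂ[α, β, γ]/(γ) realised as ℂ[α][β] (α inner, β outer variable). -/
noncomputable def reduceGamma : MvPolynomial (Fin 3) ℂ →+* Polynomial (Polynomial ℂ) :=
  eval₂Hom (Polynomial.C.comp Polynomial.C) ![Polynomial.C Polynomial.X, Polynomial.X, 0]

noncomputable def reduceGammaSection : Polynomial (Polynomial ℂ) →+* MvPolynomial (Fin 3) ℂ :=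
  Polynomial.eval₂RingHom (Polynomial.eval₂RingHom C (X 0)) (X 1)

@[simp]
theorem reduceGamma_C (a : ℂ) : reduceGamma (C a) = Polynomial.C (Polynomial.C a) := by
  simp [reduceGamma]

@[simp]
theorem reduceGamma_X_zero : reduceGamma (X 0) = Polynomial.C Polynomial.X := by
  simp [reduceGamma]

@[simp]
theorem reduceGamma_X_one : reduceGamma (X 1) = Polynomial.X := by simp [reduceGamma]

@[simp]
theorem reduceGamma_X_two : reduceGamma (X 2) = 0 := by simp [reduceGamma]

theorem reduceGamma_comp_reduceGammaSection :
    reduceGamma.comp reduceGammaSection = RingHom.id _ := by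
  refine Polynomial.ringHom_ext' (Polynomial.ringHom_ext (fun a ↦ ?_) ?_) ?_ <;>
    simp [reduceGammaSection]

theorem reduceGamma_surjective : Function.Surjective reduceGamma :=
  fun q ↦ ⟨reduceGammaSection q, congrArg (· q) reduceGamma_comp_reduceGammaSection⟩

theorem ker_reduceGamma : RingHom.ker reduceGamma = Ideal.span {X 2} := by
  refine le_antisymm (fun x hx ↦ ?_) (Ideal.span_le.mpr (by simp))
  have hmk : (Ideal.Quotient.mk (Ideal.span {X 2})).comp (reduceGammaSection.comp reduceGamma)
      = Ideal.Quotient.mk _ := by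
    refine MvPolynomial.ringHom_ext (fun a ↦ ?_) (fun i ↦ ?_)
    · simp [reduceGammaSection]
    · fin_cases i <;> simp [reduceGammaSection]
  have hx' := congrArg (· x) hmk
  simp only [RingHom.comp_apply, RingHom.mem_ker.mp hx, map_zero] at hx'
  exact Ideal.Quotient.eq_zero_iff_mem.mp hx'.symm

theorem reduceGamma_R3 (r : ℕ) : reduceGamma (Rr r).2.2 = 0 := by
  cases r <;> simp [Rr]

theorem reduceGamma_R2_succ (r : ℕ) : reduceGamma (Rr (r + 1)).2.1 =
    (Polynomial.X + Polynomial.C (Polynomial.C ((-1) ^ (r + 1) * 8))) * reduceGamma (Rr r).1 := by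
  simp [Rr, reduceGamma_R3]

theorem reduceGamma_R1_succ (r : ℕ) : reduceGamma (Rr (r + 1)).1 =
    Polynomial.C Polynomial.X * reduceGamma (Rr r).1 +
      Polynomial.C (Polynomial.C ((r : ℂ) ^ 2)) * reduceGamma (Rr r).2.1 := by
  simp [Rr]

theorem monic_eval_reduceGamma_R1 (c : ℂ) (r : ℕ) :
    ((reduceGamma (Rr r).1).eval (Polynomial.C c)).Monic :=
  (Polynomial.monic_and_natDegree_eq_of_three_term_recurrence
    (p := fun r ↦ (reduceGamma (Rr r).1).eval (Polynomial.C c))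
    (fun n ↦ ((n : ℂ) + 1) ^ 2 * (c + (-1) ^ (n + 1) * 8)) (by simp [Rr]) (by simp [Rr])
    (fun n ↦ by simp [reduceGamma_R1_succ, reduceGamma_R2_succ]; ring) r).1

theorem X_add_C_C_eq_X_sub_C_C (b : ℂ) :
    (Polynomial.X + Polynomial.C (Polynomial.C b) : Polynomial (Polynomial ℂ)) =
      Polynomial.X - Polynomial.C (Polynomial.C (-b)) := by
  simp

theorem not_X_add_C_C_dvd_reduceGamma_R1 (b : ℂ) (r : ℕ) :
    ¬ Polynomial.X + Polynomial.C (Polynomial.C b) ∣ reduceGamma (Rr r).1 := by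
  rw [X_add_C_C_eq_X_sub_C_C, Polynomial.dvd_iff_isRoot, Polynomial.IsRoot.def]
  exact (monic_eval_reduceGamma_R1 _ r).ne_zero

theorem isRelPrime_reduceGamma_R1_X_add_C_C (b : ℂ) (r : ℕ) :
    IsRelPrime (reduceGamma (Rr r).1) (Polynomial.X + Polynomial.C (Polynomial.C b)) := by
  have hirr : Irreducible (Polynomial.X + Polynomial.C (Polynomial.C b)) :=
    X_add_C_C_eq_X_sub_C_C b ▸ Polynomial.irreducible_X_sub_C _
  exact (hirr.isRelPrime_iff_not_dvd.mpr (not_X_add_C_C_dvd_reduceGamma_R1 b r)).symm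

theorem isRelPrime_reduceGamma_R1_R1_succ (r : ℕ) :
    IsRelPrime (reduceGamma (Rr r).1) (reduceGamma (Rr (r + 1)).1) := by
  induction r with
  | zero => simp [Rr, isRelPrime_one_left]
  | succ r ih =>
    have hunit : IsUnit (Polynomial.C (Polynomial.C (((r + 1 : ℕ) : ℂ) ^ 2))) :=
      Polynomial.isUnit_C.mpr <| Polynomial.isUnit_C.mpr <|
        isUnit_iff_ne_zero.mpr (pow_ne_zero _ (Nat.cast_ne_zero.mpr r.succ_ne_zero))
    rw [reduceGamma_R1_succ (r + 1), reduceGamma_R2_succ, IsRelPrime.mul_add_right_right_iff,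
      isRelPrime_mul_unit_left_right hunit, IsRelPrime.mul_right_iff]
    exact ⟨isRelPrime_reduceGamma_R1_X_add_C_C _ _, ih.symm⟩

theorem isRelPrime_reduceGamma_R1_R2_succ (r : ℕ) :
    IsRelPrime (reduceGamma (Rr (r + 1)).1) (reduceGamma (Rr (r + 1)).2.1) := by
  rw [reduceGamma_R2_succ]
  exact (isRelPrime_reduceGamma_R1_X_add_C_C _ _).mul_right
    (isRelPrime_reduceGamma_R1_R1_succ r).symm

theorem reduceGamma_R2_succ_ne_zero (r : ℕ) : reduceGamma (Rr (r + 1)).2.1 ≠ 0 := by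
  rw [reduceGamma_R2_succ]
  refine mul_ne_zero (Polynomial.X_add_C_ne_zero _) fun h ↦ ?_
  exact (monic_eval_reduceGamma_R1 0 r).ne_zero (by rw [h, Polynomial.eval_zero])

theorem R1_mem_Jr (r : ℕ) : (Rr r).1 ∈ Jr r := Ideal.subset_span (by simp)

theorem R2_mem_Jr (r : ℕ) : (Rr r).2.1 ∈ Jr r := Ideal.subset_span (by simp)

theorem R3_mem_Jr (r : ℕ) : (Rr r).2.2 ∈ Jr r := Ideal.subset_span (by simp)

theorem Jr_zero : Jr 0 = ⊤ := Ideal.eq_top_of_isUnit_mem _ (R1_mem_Jr 0) isUnit_one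

theorem Jr_succ_le (r : ℕ) : Jr (r + 1) ≤ Jr r := by
  refine Ideal.span_le.mpr <| Set.insert_subset_iff.mpr ⟨?_, Set.insert_subset_iff.mpr ⟨?_, ?_⟩⟩
  · exact add_mem (Ideal.mul_mem_left _ _ (R1_mem_Jr r)) (Ideal.mul_mem_left _ _ (R2_mem_Jr r))
  · exact add_mem (Ideal.mul_mem_left _ _ (R1_mem_Jr r)) (Ideal.mul_mem_left _ _ (R3_mem_Jr r))
  · exact Set.singleton_subset_iff.mpr (Ideal.mul_mem_left _ _ (R1_mem_Jr r))

theorem Jr_le_Jr_sub_one (r : ℕ) : Jr r ≤ Jr (r - 1) := by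
  cases r with
  | zero => exact le_rfl
  | succ r => exact Jr_succ_le r

theorem X_two_mul_R2_mem_Jr_succ (r : ℕ) : X 2 * (Rr r).2.1 ∈ Jr (r + 1) := by
  cases r with
  | zero => simp [Rr]
  | succ r =>
    have hunit : IsUnit (C (((r + 1 : ℕ) : ℂ) ^ 2) : MvPolynomial (Fin 3) ℂ) :=
      (isUnit_iff_ne_zero.mpr (pow_ne_zero _ (Nat.cast_ne_zero.mpr r.succ_ne_zero))).map C
    refine (Ideal.unit_mul_mem_iff_mem _ hunit).mp ?_
    have h : C (((r + 1 : ℕ) : ℂ) ^ 2) * (X 2 * (Rr (r + 1)).2.1) =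
        X 2 * (Rr (r + 2)).1 - X 0 * (Rr (r + 2)).2.2 := by
      simp only [Rr]; ring
    rw [h]
    exact sub_mem (Ideal.mul_mem_left _ _ (R1_mem_Jr _)) (Ideal.mul_mem_left _ _ (R3_mem_Jr _))

theorem X_two_mul_R3_mem_Jr_succ (r : ℕ) : X 2 * (Rr r).2.2 ∈ Jr (r + 1) := by
  cases r with
  | zero => simp [Rr]
  | succ r =>
    have hunit : IsUnit
        (C (2 * ((r + 1 : ℕ) : ℂ) / (((r + 1 : ℕ) : ℂ) + 1)) : MvPolynomial (Fin 3) ℂ) :=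
      (isUnit_iff_ne_zero.mpr <| div_ne_zero
        (mul_ne_zero two_ne_zero (Nat.cast_ne_zero.mpr r.succ_ne_zero))
        (Nat.cast_add_one_ne_zero (r + 1))).map C
    refine (Ideal.unit_mul_mem_iff_mem _ hunit).mp ?_
    have h : C (2 * ((r + 1 : ℕ) : ℂ) / (((r + 1 : ℕ) : ℂ) + 1)) * (X 2 * (Rr (r + 1)).2.2) =
        X 2 * (Rr (r + 2)).2.1 - (X 1 + C ((-1) ^ (r + 2) * 8)) * (Rr (r + 2)).2.2 := by
      simp only [Rr]; ring
    rw [h]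
    exact sub_mem (Ideal.mul_mem_left _ _ (R2_mem_Jr _)) (Ideal.mul_mem_left _ _ (R3_mem_Jr _))

theorem X_two_mul_mem_Jr_succ {r : ℕ} {p : MvPolynomial (Fin 3) ℂ} (hp : p ∈ Jr r) :
    X 2 * p ∈ Jr (r + 1) := by
  induction hp using Submodule.span_induction with
  | mem x hx =>
    rcases hx with rfl | rfl | rfl
    · exact R3_mem_Jr (r + 1)
    · exact X_two_mul_R2_mem_Jr_succ r
    · exact X_two_mul_R3_mem_Jr_succ r
  | zero => simp
  | add x y _ _ hx hy => rw [mul_add]; exact add_mem hx hy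
  | smul a x _ hx => rw [smul_eq_mul, mul_left_comm]; exact Ideal.mul_mem_left _ _ hx

theorem mem_Jr_of_X_two_mul_mem_Jr_succ {r : ℕ} {p : MvPolynomial (Fin 3) ℂ}
    (hp : X 2 * p ∈ Jr (r + 1)) : p ∈ Jr r := by
  have hle : Ideal.span {(Rr (r + 1)).1, (Rr (r + 1)).2.1, (Rr r).1} ≤ Jr r :=
    Ideal.span_le.mpr <| Set.insert_subset_iff.mpr ⟨Jr_succ_le r (R1_mem_Jr _),
      Set.insert_subset_iff.mpr
        ⟨Jr_succ_le r (R2_mem_Jr _), Set.singleton_subset_iff.mpr (R1_mem_Jr r)⟩⟩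
  exact hle <| Ideal.mem_span_triple_of_mul_mem_span_triple reduceGamma reduceGamma_surjective
    (IsRegular.of_ne_zero (X_ne_zero 2)).left ker_reduceGamma
    (isRelPrime_reduceGamma_R1_R2_succ r) (reduceGamma_R2_succ_ne_zero r) hp

theorem X_two_mul_mem_Jr_iff (r : ℕ) {p : MvPolynomial (Fin 3) ℂ} :
    X 2 * p ∈ Jr r ↔ p ∈ Jr (r - 1) := by
  cases r with
  | zero => simp [Jr_zero]
  | succ r => exact ⟨mem_Jr_of_X_two_mul_mem_Jr_succ, X_two_mul_mem_Jr_succ⟩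

theorem stmt11_general (r : ℕ) :
    {x : MvPolynomial (Fin 3) ℂ ⧸ Jr r | Ideal.Quotient.mk (Jr r) (X 2) * x = 0}
      = (Ideal.Quotient.mk (Jr r)) '' (Jr (r - 1)) := by
  ext x
  obtain ⟨p, rfl⟩ := Ideal.Quotient.mk_surjective x
  rw [Set.mem_ofPred_eq, ← map_mul, Ideal.Quotient.eq_zero_iff_mem, X_two_mul_mem_Jr_iff,
    ← Ideal.mem_quotient_iff_mem (Jr_le_Jr_sub_one r),
    Ideal.mem_map_iff_of_surjective _ Ideal.Quotient.mk_surjective]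
  rfl

/-- For every r ≥ 1, the kernel of the endomorphism of F_r = ℂ[α,β,γ]/J_r given by
multiplication by (the class of) γ equals the image of the ideal J_{r−1} under the quotient
map ℂ[α,β,γ] → F_r (this image makes sense since J_r ⊆ J_{r−1}). -/
theorem stmt11 (r : ℕ) (hr : 1 ≤ r) :
    {x : MvPolynomial (Fin 3) ℂ ⧸ Jr r | Ideal.Quotient.mk (Jr r) (X 2) * x = 0}
      = (Ideal.Quotient.mk (Jr r)) '' (Jr (r - 1)) :=
  stmt11_general r
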